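/- arXiv:2508.10331 — 2 statements merged into one kernel-verified Lean document; each statement's English description precedes it below -/
import Mathlib

section
/- Let σ, σ0, τ0 > 0, z ≥ 0, and N a positive integer. Define R(β) = ∫_{-∞}^{∞} (1/(√(2π) σ0)) exp(−(τ − τ0)²/(2σ0²)) · Φ((Nτ + τ0 β)/(2√N σ) − z) · τ dτ, where Φ is the standard normal CDF. Then the derivative of R with respect to β equals exp(−(Nτ0 + βτ0 − 2√N z σ)²/(2N(Nσ0² + 4σ²))) · τ0 · (−β τ0 σ0² + 2σ(√N z σ0² + 2τ0 σ)) / (√N · √(2π) · σ0 · √(4/σ0² + N/σ²) · σ · (Nσ0² + 4σ²)). -/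
open Real MeasureTheory

/-- Standard normal CDF. -/
noncomputable def Phi (x : ℝ) : ℝ :=
  ∫ t in Set.Iic x, (Real.sqrt (2 * Real.pi))⁻¹ * Real.exp (-t ^ 2 / 2)

/-!
Differentiate under the integral sign: `Phi` has the bounded derivative `gaussianPDFReal 0 1`
and `τ` times the Gaussian weight is integrable, so dominated convergence applies. The derivative
is then the first moment of a product of two Gaussians in `τ`; completing the square turns it into
a single Gaussian, whose first moment is its mean times its total mass.
-/

open ProbabilityTheory

lemma gaussianPDFReal_zero_one (x : ℝ) :
    gaussianPDFReal 0 1 x = (√(2 * π))⁻¹ * exp (-x ^ 2 / 2) := by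
  simp [gaussianPDFReal]

lemma gaussianPDFReal_zero_one_le (x : ℝ) : gaussianPDFReal 0 1 x ≤ (√(2 * π))⁻¹ := by
  rw [gaussianPDFReal_zero_one]
  exact mul_le_of_le_one_right (by positivity) (exp_le_one_iff.2 (by nlinarith [sq_nonneg x]))

lemma Phi_eq_setIntegral (x : ℝ) : Phi x = ∫ t in Set.Iic x, gaussianPDFReal 0 1 t := by
  simp only [Phi, gaussianPDFReal_zero_one]

lemma hasDerivAt_Phi (x : ℝ) : HasDerivAt Phi (gaussianPDFReal 0 1 x) x := by
  have hint := integrable_gaussianPDFReal 0 1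
  have hcont : Continuous (gaussianPDFReal 0 1) := by
    rw [gaussianPDFReal_def]; fun_prop
  have hPhi : Phi = fun u => Phi 0 + ∫ t in (0 : ℝ)..u, gaussianPDFReal 0 1 t := by
    funext u
    rw [← intervalIntegral.integral_Iic_sub_Iic hint.integrableOn hint.integrableOn,
      Phi_eq_setIntegral, Phi_eq_setIntegral, add_sub_cancel]
  rw [hPhi]
  exact (intervalIntegral.integral_hasDerivAt_right (hcont.intervalIntegrable 0 x)
    (hcont.stronglyMeasurableAtFilter volume _) hcont.continuousAt).const_add _

lemma abs_Phi_le_one (x : ℝ) : |Phi x| ≤ 1 := by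
  have hnonneg : 0 ≤ Phi x := by
    rw [Phi_eq_setIntegral]
    exact setIntegral_nonneg measurableSet_Iic fun t _ => gaussianPDFReal_nonneg 0 1 t
  have hle : Phi x ≤ 1 := by
    rw [Phi_eq_setIntegral, ← integral_gaussianPDFReal_eq_one 0 one_ne_zero]
    exact setIntegral_le_integral (integrable_gaussianPDFReal 0 1)
      (.of_forall (gaussianPDFReal_nonneg 0 1))
  rwa [abs_of_nonneg hnonneg]

theorem hasDerivAt_integral_mul_comp_add {α : Type*} [MeasurableSpace α] {μ : Measure α}
    {g u : α → ℝ} {F f : ℝ → ℝ} {C M : ℝ} (b x₀ : ℝ)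
    (hg : Integrable g μ) (hu : Measurable u) (hF : ∀ y, HasDerivAt F (f y) y)
    (hf : Measurable f) (hFC : ∀ y, |F y| ≤ C) (hfM : ∀ y, |f y| ≤ M) :
    HasDerivAt (fun x => ∫ a, g a * F (u a + b * x) ∂μ)
      ((∫ a, g a * f (u a + b * x₀) ∂μ) * b) x₀ := by
  have hFcont : Continuous F := continuous_iff_continuousAt.2 fun y => (hF y).continuousAt
  have hFmeas : ∀ x, AEStronglyMeasurable (fun a => F (u a + b * x)) μ := fun x =>
    (hFcont.measurable.comp (hu.add_const _)).aestronglyMeasurable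
  have hF'_meas : AEStronglyMeasurable (fun a => g a * (f (u a + b * x₀) * b)) μ :=
    hg.aestronglyMeasurable.mul
      ((hf.comp (hu.add_const _)).mul_const b).aestronglyMeasurable
  have hbound (a : α) (x : ℝ) : ‖g a * (f (u a + b * x) * b)‖ ≤ ‖g a‖ * (M * |b|) := by
    rw [norm_mul, norm_mul, Real.norm_eq_abs (f _), Real.norm_eq_abs b]
    gcongr
    exact hfM _
  have hderiv : ∀ a x, HasDerivAt (fun x => g a * F (u a + b * x))
      (g a * (f (u a + b * x) * b)) x := fun a x => by
    have hlin : HasDerivAt (fun x => u a + b * x) b x := by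
      simpa using ((hasDerivAt_id x).const_mul b).const_add (u a)
    exact ((hF _).comp x hlin).const_mul (g a)
  have key := hasDerivAt_integral_of_dominated_loc_of_deriv_le (x₀ := x₀)
    (F := fun x a => g a * F (u a + b * x)) Filter.univ_mem
    (.of_forall fun x => hg.aestronglyMeasurable.mul (hFmeas x))
    (hg.mul_bdd (hFmeas x₀) (.of_forall fun a => by simpa using hFC _))
    hF'_meas (.of_forall fun a x _ => hbound a x) (hg.norm.mul_const _)
    (.of_forall fun a x _ => hderiv a x)
  simpa only [← mul_assoc, integral_mul_const] using key.2

lemma neg_sq_div_two_mul (v x : ℝ) : -x ^ 2 / (2 * v) = -(2 * v)⁻¹ * x ^ 2 := by ring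

lemma integrable_exp_neg_sq_div {v : ℝ} (hv : 0 < v) :
    Integrable fun x => exp (-x ^ 2 / (2 * v)) := by
  simpa only [neg_sq_div_two_mul] using integrable_exp_neg_mul_sq (by positivity : 0 < (2 * v)⁻¹)

lemma integrable_mul_exp_neg_sq_div {v : ℝ} (hv : 0 < v) :
    Integrable fun x => x * exp (-x ^ 2 / (2 * v)) := by
  simpa only [neg_sq_div_two_mul] using
    integrable_mul_exp_neg_mul_sq (by positivity : 0 < (2 * v)⁻¹)

lemma integrable_mul_exp_neg_sub_sq_div {v : ℝ} (hv : 0 < v) (m : ℝ) :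
    Integrable fun x => x * exp (-(x - m) ^ 2 / (2 * v)) := by
  have hshift := ((integrable_mul_exp_neg_sq_div hv).add
    ((integrable_exp_neg_sq_div hv).const_mul m)).comp_sub_right m
  refine hshift.congr (.of_forall fun x => ?_)
  simp only [Pi.add_apply]
  ring

lemma integral_mul_exp_neg_sq_div {v : ℝ} : ∫ x, x * exp (-x ^ 2 / (2 * v)) = 0 := by
  have h := integral_neg_eq_self (fun x => x * exp (-x ^ 2 / (2 * v))) volume
  simp only [neg_sq, neg_mul, integral_neg] at h
  linarith

lemma integral_mul_exp_neg_sub_sq_div {v : ℝ} (hv : 0 < v) (m : ℝ) :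
    ∫ x, x * exp (-(x - m) ^ 2 / (2 * v)) = m * √(2 * π * v) := by
  rw [← integral_add_right_eq_self _ m]
  simp only [add_sub_cancel_right, add_mul]
  rw [integral_add (integrable_mul_exp_neg_sq_div hv) ((integrable_exp_neg_sq_div hv).const_mul m),
    integral_mul_exp_neg_sq_div, integral_const_mul]
  simp only [neg_sq_div_two_mul, integral_gaussian]
  rw [zero_add, div_inv_eq_mul, ← mul_assoc, mul_comm π 2]

lemma exp_neg_sub_sq_div_mul_exp_neg_sq {v : ℝ} (hv : 0 < v) (μ k c x : ℝ) :
    exp (-(x - μ) ^ 2 / (2 * v)) * exp (-(k * x + c) ^ 2 / 2) =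
      exp (-(k * μ + c) ^ 2 / (2 * (1 + k ^ 2 * v))) *
        exp (-(x - (μ - k * c * v) / (1 + k ^ 2 * v)) ^ 2 / (2 * (v / (1 + k ^ 2 * v)))) := by
  have : 0 < 1 + k ^ 2 * v := by positivity
  rw [← exp_add, ← exp_add]
  congr 1
  field_simp
  ring

lemma integral_mul_exp_neg_sub_sq_div_mul_exp_neg_sq {v : ℝ} (hv : 0 < v) (μ k c : ℝ) :
    ∫ x, x * exp (-(x - μ) ^ 2 / (2 * v)) * exp (-(k * x + c) ^ 2 / 2) =
      exp (-(k * μ + c) ^ 2 / (2 * (1 + k ^ 2 * v))) *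
        ((μ - k * c * v) / (1 + k ^ 2 * v) * √(2 * π * (v / (1 + k ^ 2 * v)))) := by
  simp_rw [mul_assoc _ (exp _), exp_neg_sub_sq_div_mul_exp_neg_sq hv, mul_left_comm _ (exp _),
    integral_const_mul, integral_mul_exp_neg_sub_sq_div (by positivity : 0 < v / (1 + k ^ 2 * v))]

theorem hasDerivAt_integral_mul_exp_neg_sub_sq_div_mul_Phi {v : ℝ} (hv : 0 < v)
    (μ k c b x₀ : ℝ) :
    HasDerivAt (fun x => ∫ τ, τ * exp (-(τ - μ) ^ 2 / (2 * v)) * Phi (k * τ + c + b * x))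
      ((√(2 * π))⁻¹ * (exp (-(k * μ + (c + b * x₀)) ^ 2 / (2 * (1 + k ^ 2 * v))) *
        ((μ - k * (c + b * x₀) * v) / (1 + k ^ 2 * v) * √(2 * π * (v / (1 + k ^ 2 * v))))) *
        b) x₀ := by
  have hderiv := hasDerivAt_integral_mul_comp_add b x₀ (u := fun τ => k * τ + c)
    (integrable_mul_exp_neg_sub_sq_div hv μ) (by fun_prop) hasDerivAt_Phi
    (measurable_gaussianPDFReal 0 1) abs_Phi_le_one
    (fun y => (abs_of_nonneg (gaussianPDFReal_nonneg 0 1 y)).trans_le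
      (gaussianPDFReal_zero_one_le y))
  have hint :
      ∫ τ, τ * exp (-(τ - μ) ^ 2 / (2 * v)) * gaussianPDFReal 0 1 (k * τ + c + b * x₀) =
      (√(2 * π))⁻¹ *
        ∫ τ, τ * exp (-(τ - μ) ^ 2 / (2 * v)) * exp (-(k * τ + (c + b * x₀)) ^ 2 / 2) := by
    rw [← integral_const_mul]
    congr 1; funext τ
    rw [gaussianPDFReal_zero_one, add_assoc]
    ring
  rwa [hint, integral_mul_exp_neg_sub_sq_div_mul_exp_neg_sq hv] at hderiv

theorem stmt_0_general (σ σ0 τ0 z : ℝ) (hσ : 0 < σ) (hσ0 : 0 < σ0)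
    (N : ℕ) (hN : 0 < N)
    (R : ℝ → ℝ)
    (hR : R = fun β => ∫ τ : ℝ,
      (1 / (Real.sqrt (2 * Real.pi) * σ0)) * Real.exp (-(τ - τ0) ^ 2 / (2 * σ0 ^ 2)) *
        Phi ((N * τ + τ0 * β) / (2 * Real.sqrt N * σ) - z) * τ) :
    ∀ β : ℝ, HasDerivAt R
      (Real.exp (-(N * τ0 + β * τ0 - 2 * Real.sqrt N * z * σ) ^ 2 /
          (2 * N * (N * σ0 ^ 2 + 4 * σ ^ 2))) * τ0 *
        (-β * τ0 * σ0 ^ 2 + 2 * σ * (Real.sqrt N * z * σ0 ^ 2 + 2 * τ0 * σ)) /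
        (Real.sqrt N * Real.sqrt (2 * Real.pi) * σ0 * Real.sqrt (4 / σ0 ^ 2 + N / σ ^ 2) * σ *
          (N * σ0 ^ 2 + 4 * σ ^ 2))) β := by
  intro β
  subst hR
  set s : ℝ := √N
  have hs0 : 0 < s := Real.sqrt_pos.2 (by exact_mod_cast hN)
  have hs : s ^ 2 = N := Real.sq_sqrt (Nat.cast_nonneg N)
  set k : ℝ := N / (2 * s * σ) with hk
  set b : ℝ := τ0 / (2 * s * σ) with hb
  have hR : (fun β => ∫ τ, 1 / (√(2 * π) * σ0) * exp (-(τ - τ0) ^ 2 / (2 * σ0 ^ 2)) *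
      Phi ((N * τ + τ0 * β) / (2 * s * σ) - z) * τ) = fun x => 1 / (√(2 * π) * σ0) *
      ∫ τ, τ * exp (-(τ - τ0) ^ 2 / (2 * σ0 ^ 2)) * Phi (k * τ + -z + b * x) := by
    funext x
    rw [← integral_const_mul]
    congr 1; funext τ
    rw [show (N * τ + τ0 * x) / (2 * s * σ) - z = k * τ + -z + b * x by rw [hk, hb]; ring]
    ring
  rw [hR]
  refine ((hasDerivAt_integral_mul_exp_neg_sub_sq_div_mul_Phi (by positivity) τ0 k (-z) b
    β).const_mul _).congr_deriv ?_
  have hexp : -(k * τ0 + (-z + b * β)) ^ 2 / (2 * (1 + k ^ 2 * σ0 ^ 2)) =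
      -(N * τ0 + β * τ0 - 2 * s * z * σ) ^ 2 / (2 * N * (N * σ0 ^ 2 + 4 * σ ^ 2)) := by
    rw [hk, hb, ← hs]
    field_simp
    ring
  have hsqrt : √(2 * π * (σ0 ^ 2 / (1 + k ^ 2 * σ0 ^ 2))) =
      √(2 * π) * 2 / √(4 / σ0 ^ 2 + N / σ ^ 2) := by
    have hrad : 2 * π * (σ0 ^ 2 / (1 + k ^ 2 * σ0 ^ 2)) =
        2 * π * 2 ^ 2 / (4 / σ0 ^ 2 + N / σ ^ 2) := by
      rw [hk, ← hs]
      field_simp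
      ring
    rw [hrad, Real.sqrt_div' _ (by positivity), Real.sqrt_mul (by positivity),
      Real.sqrt_sq zero_le_two]
  rw [hexp, hsqrt, hk, hb, ← hs]
  field_simp
  ring

theorem stmt_0 (σ σ0 τ0 z : ℝ) (hσ : 0 < σ) (hσ0 : 0 < σ0) (hτ0 : 0 < τ0)
    (hz : 0 ≤ z) (N : ℕ) (hN : 0 < N)
    (R : ℝ → ℝ)
    (hR : R = fun β => ∫ τ : ℝ,
      (1 / (Real.sqrt (2 * Real.pi) * σ0)) * Real.exp (-(τ - τ0) ^ 2 / (2 * σ0 ^ 2)) *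
        Phi ((N * τ + τ0 * β) / (2 * Real.sqrt N * σ) - z) * τ) :
    ∀ β : ℝ, HasDerivAt R
      (Real.exp (-(N * τ0 + β * τ0 - 2 * Real.sqrt N * z * σ) ^ 2 /
          (2 * N * (N * σ0 ^ 2 + 4 * σ ^ 2))) * τ0 *
        (-β * τ0 * σ0 ^ 2 + 2 * σ * (Real.sqrt N * z * σ0 ^ 2 + 2 * τ0 * σ)) /
        (Real.sqrt N * Real.sqrt (2 * Real.pi) * σ0 * Real.sqrt (4 / σ0 ^ 2 + N / σ ^ 2) * σ *
          (N * σ0 ^ 2 + 4 * σ ^ 2))) β :=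
  stmt_0_general σ σ0 τ0 z hσ hσ0 N hN R hR
end

section
/- Let (τ_k, τ̂_k)_{k≥1} be i.i.d. pairs where τ_k has finite second moment and, for each K, thresholds c_K are random variables independent across the index construction such that c_K →p c for a constant c. Assume that conditionally on τ_k, the distribution of τ̂_k is continuous (Gaussian). Then K⁻¹ Σ_{k=1}^K |τ_k| · 1{c_K < τ̂_k ≤ c} converges in probability to 0 as K → ∞. -/
/-!
On the event `|c_K - c| < δ` every indicator `1{c_K < τ̂_k ≤ c}` is dominated by
`1{c - δ < τ̂_k ≤ c}`, so the average is dominated by an average of identically distributed,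
nonnegative variables with mean `m(δ) = E[|τ| 1{c - δ < τ̂ ≤ c}]`. Markov's inequality bounds the
probability of the bad event by `P(|c_K - c| ≥ δ) + m(δ)/ε`. The first term vanishes as `K → ∞`,
and `m(δ) → 0` as `δ → 0⁺` by dominated convergence, because `τ̂` has no atom at `c`.
-/

open MeasureTheory ProbabilityTheory Filter Topology Finset
open scoped ENNReal

theorem ENNReal.tendsto_nhds_zero_of_eventually_le_add {ι κ : Type*} {l : Filter ι}
    {l' : Filter κ} [l'.NeBot] {a : ι → ℝ≥0∞} {b : κ → ι → ℝ≥0∞} {e : κ → ℝ≥0∞}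
    (hab : ∀ᶠ δ in l', ∀ᶠ K in l, a K ≤ b δ K + e δ)
    (hb : ∀ᶠ δ in l', Tendsto (b δ) l (𝓝 0)) (he : Tendsto e l' (𝓝 0)) :
    Tendsto a l (𝓝 0) := by
  rw [ENNReal.tendsto_nhds_zero]
  intro η hη
  have hη2 : 0 < η / 2 := ENNReal.half_pos hη.ne'
  obtain ⟨δ, hδab, hδb, hδe⟩ := (hab.and (hb.and (he.eventually (gt_mem_nhds hη2)))).exists
  filter_upwards [hδab, ENNReal.tendsto_nhds_zero.1 hδb _ hη2] with K hK hbK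
  calc a K ≤ b δ K + e δ := hK
    _ ≤ η / 2 + η / 2 := add_le_add hbK hδe.le
    _ = η := ENNReal.add_halves η

theorem meas_ge_average_le_integral_div {Ω α : Type*} [MeasurableSpace Ω] [MeasurableSpace α]
    {P : Measure Ω} [IsFiniteMeasure P] {μ : Measure α} {X : ℕ → Ω → α}
    (hX : ∀ k, Measurable (X k)) (hlaw : ∀ k, P.map (X k) = μ)
    {f : α → ℝ} (hf : Measurable f) (hf0 : 0 ≤ f) (hfi : Integrable f μ)
    {K : ℕ} (hK : 0 < K) {ε : ℝ} (hε : 0 < ε) :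
    P {ω | ε ≤ (K : ℝ)⁻¹ * ∑ k ∈ range K, f (X k ω)} ≤ ENNReal.ofReal ((∫ x, f x ∂μ) / ε) := by
  have hfXi : ∀ k, Integrable (fun ω => f (X k ω)) P := fun k =>
    (integrable_map_measure hf.aestronglyMeasurable (hX k).aemeasurable).1 (hlaw k ▸ hfi)
  have hmean : ∀ k, ∫ ω, f (X k ω) ∂P = ∫ x, f x ∂μ := fun k => by
    rw [← hlaw k, integral_map (hX k).aemeasurable hf.aestronglyMeasurable]
  have havg : ∫ ω, (K : ℝ)⁻¹ * ∑ k ∈ range K, f (X k ω) ∂P = ∫ x, f x ∂μ := by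
    rw [integral_const_mul, integral_finsetSum _ fun k _ => hfXi k]
    simp only [hmean, sum_const, card_range, nsmul_eq_mul]
    field_simp
  have hmarkov := mul_meas_ge_le_integral_of_nonneg
    (f := fun ω => (K : ℝ)⁻¹ * ∑ k ∈ range K, f (X k ω))
    (ae_of_all _ fun ω => mul_nonneg (by positivity) (sum_nonneg fun k _ => hf0 (X k ω)))
    ((integrable_finsetSum _ fun k _ => hfXi k).const_mul (K : ℝ)⁻¹) ε
  rw [havg, measureReal_def] at hmarkov
  rw [← ENNReal.ofReal_toReal (measure_ne_top P _)]
  exact ENNReal.ofReal_le_ofReal ((le_div_iff₀ hε).2 (by linarith))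

noncomputable def bandWeight (a b : ℝ) (x : ℝ × ℝ) : ℝ :=
  |x.1| * if a < x.2 ∧ x.2 ≤ b then 1 else 0

namespace bandWeight

variable {a a' b : ℝ}

theorem nonneg (x : ℝ × ℝ) : 0 ≤ bandWeight a b x := by
  unfold bandWeight; positivity

theorem norm_le_abs_fst (x : ℝ × ℝ) : ‖bandWeight a b x‖ ≤ |x.1| := by
  unfold bandWeight; split_ifs <;> simp

theorem antitone_left (h : a' ≤ a) (x : ℝ × ℝ) : bandWeight a b x ≤ bandWeight a' b x := by
  unfold bandWeight
  gcongr
  split_ifs <;> grind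

theorem measurable : Measurable (bandWeight a b) :=
  measurable_fst.abs.mul
    (Measurable.ite (measurable_snd measurableSet_Ioc) measurable_const measurable_const)

theorem integrable {μ : Measure (ℝ × ℝ)} (hμ : Integrable Prod.fst μ) :
    Integrable (bandWeight a b) μ :=
  hμ.abs.mono' measurable.aestronglyMeasurable (ae_of_all _ norm_le_abs_fst)

theorem eventually_eq_zero {c : ℝ} {x : ℝ × ℝ} (hx : x.2 ≠ c) :
    ∀ᶠ δ in 𝓝[>] (0 : ℝ), bandWeight (c - δ) c x = 0 := by
  filter_upwards [nhdsWithin_le_nhds (Iio_mem_nhds (abs_pos.2 (sub_ne_zero.2 hx.symm)))]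
    with δ hδ
  rw [bandWeight, if_neg, mul_zero]
  rintro ⟨hlt, hle⟩
  rw [abs_of_nonneg (sub_nonneg.2 hle), Set.mem_Iio] at hδ
  linarith

theorem tendsto_integral {μ : Measure (ℝ × ℝ)} (hμ : Integrable Prod.fst μ) {c : ℝ}
    (hc : μ.map Prod.snd {c} = 0) :
    Tendsto (fun δ => ∫ x, bandWeight (c - δ) c x ∂μ) (𝓝[>] 0) (𝓝 0) := by
  have hae : ∀ᵐ x ∂μ, x.2 ≠ c := by
    rw [Measure.map_apply measurable_snd (measurableSet_singleton c)] at hc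
    exact ae_iff.2 (by simpa [Set.preimage] using hc)
  simpa using tendsto_integral_filter_of_dominated_convergence (fun x => |x.1|)
    (.of_forall fun δ => measurable.aestronglyMeasurable)
    (.of_forall fun δ => ae_of_all _ norm_le_abs_fst)
    hμ.abs (hae.mono fun x hx =>
      tendsto_const_nhds.congr' ((eventually_eq_zero hx).mono fun _ h => h.symm))

end bandWeight

theorem setOf_le_abs_average_bandWeight_subset {Ω : Type*} (X : ℕ → Ω → ℝ × ℝ) (a : Ω → ℝ)
    (c δ ε : ℝ) (K : ℕ) :
    {ω | ε ≤ |(K : ℝ)⁻¹ * ∑ k ∈ range K, bandWeight (a ω) c (X k ω)|} ⊆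
      {ω | δ ≤ |a ω - c|} ∪ {ω | ε ≤ (K : ℝ)⁻¹ * ∑ k ∈ range K, bandWeight (c - δ) c (X k ω)} := by
  intro ω hω
  rw [Set.mem_union, or_iff_not_imp_left]
  intro (hfar : ¬δ ≤ |a ω - c|)
  have hlow : c - δ ≤ a ω := by
    linarith [neg_abs_le (a ω - c), not_le.1 hfar]
  replace hω : ε ≤ _ := hω
  rw [abs_of_nonneg (mul_nonneg (by positivity)
    (sum_nonneg fun k _ => bandWeight.nonneg _))] at hω
  exact hω.trans (mul_le_mul_of_nonneg_left
    (sum_le_sum fun k _ => bandWeight.antitone_left hlow _) (by positivity))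

theorem stmt_12_general {Ω : Type*} [MeasureSpace Ω] [IsProbabilityMeasure (ℙ : Measure Ω)]
    (W : ℕ → Ω → ℝ × ℝ) (hmeas : ∀ k, Measurable (W k))
    (μ : Measure (ℝ × ℝ)) (hident : ∀ k, Measure.map (W k) ℙ = μ)
    (hmom : Integrable (fun ω => ((W 0 ω).1) ^ 2) ℙ)
    (hcont : ∀ x : ℝ, μ.map Prod.snd {x} = 0)
    (c : ℝ) (cK : ℕ → Ω → ℝ)
    (hcK : ∀ ε : ℝ, 0 < ε →
      Tendsto (fun K => ℙ {ω | ε ≤ |cK K ω - c|}) atTop (nhds 0)) :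
    ∀ ε : ℝ, 0 < ε →
      Tendsto (fun K : ℕ =>
          ℙ {ω | ε ≤ |(K : ℝ)⁻¹ * ∑ k ∈ Finset.range K,
            |(W k ω).1| * (if cK K ω < (W k ω).2 ∧ (W k ω).2 ≤ c then 1 else 0)|})
        atTop (nhds 0) := by
  intro ε hε
  have hμ : Integrable Prod.fst μ := by
    rw [← hident 0, integrable_map_measure measurable_fst.aestronglyMeasurable
      (hmeas 0).aemeasurable]
    exact ((memLp_two_iff_integrable_sq (by fun_prop)).2 hmom).integrable one_le_two
  refine ENNReal.tendsto_nhds_zero_of_eventually_le_add (l' := 𝓝[>] 0)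
    (b := fun δ K => ℙ {ω | δ ≤ |cK K ω - c|})
    (e := fun δ => ENNReal.ofReal ((∫ x, bandWeight (c - δ) c x ∂μ) / ε))
    ?_ (eventually_nhdsWithin_of_forall hcK) ?_
  · refine .of_forall fun δ => ?_
    filter_upwards [eventually_gt_atTop 0] with K hK
    calc _ ≤ _ := measure_mono (setOf_le_abs_average_bandWeight_subset W (cK K) c δ ε K)
      _ ≤ _ := measure_union_le _ _
      _ ≤ _ := by
        gcongr
        exact meas_ge_average_le_integral_div hmeas hident bandWeight.measurable
          bandWeight.nonneg (bandWeight.integrable hμ) hK hε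
  · simpa using ENNReal.tendsto_ofReal ((bandWeight.tendsto_integral hμ (hcont c)).div_const ε)

theorem stmt_12 {Ω : Type*} [MeasureSpace Ω] [IsProbabilityMeasure (ℙ : Measure Ω)]
    (W : ℕ → Ω → ℝ × ℝ) (hmeas : ∀ k, Measurable (W k))
    (hindep : iIndepFun W ℙ)
    (μ : Measure (ℝ × ℝ)) (hident : ∀ k, Measure.map (W k) ℙ = μ)
    (hmom : Integrable (fun ω => ((W 0 ω).1) ^ 2) ℙ)
    (hcont : ∀ x : ℝ, μ.map Prod.snd {x} = 0)
    (c : ℝ) (cK : ℕ → Ω → ℝ) (hcKmeas : ∀ K, Measurable (cK K))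
    (hcK : ∀ ε : ℝ, 0 < ε →
      Tendsto (fun K => ℙ {ω | ε ≤ |cK K ω - c|}) atTop (nhds 0)) :
    ∀ ε : ℝ, 0 < ε →
      Tendsto (fun K : ℕ =>
          ℙ {ω | ε ≤ |(K : ℝ)⁻¹ * ∑ k ∈ Finset.range K,
            |(W k ω).1| * (if cK K ω < (W k ω).2 ∧ (W k ω).2 ≤ c then 1 else 0)|})
        atTop (nhds 0) :=
  stmt_12_general W hmeas μ hident hmom hcont c cK hcK
end
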